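/- arXiv:1608.05679 — 3 statements merged into one kernel-verified Lean document; each statement's English description precedes it below -/
import Mathlib

section
/- The function φ: ℝ → ℝ given by φ(p) = p^3 + p is injective, but there is no rational function r with real coefficients such that r(p^3 + p) = p for all p in the domain of r. -/
/-!
The map is strictly increasing as a sum of two strictly increasing maps. If `num / den` inverted
`q = X ^ 3 + X` wherever `den ∘ q` does not vanish, the polynomial identity `num ∘ q = X * (den ∘ q)`
would hold at infinitely many points, hence identically; comparing degrees then gives
`3 * deg num = 3 * deg den + 1`, which is impossible.
-/

open Polynomial

namespace Polynomial

variable {K : Type*} [Field K]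

theorem comp_ne_zero_of_natDegree_pos {p q : K[X]} (hp : p ≠ 0) (hq : 0 < q.natDegree) :
    p.comp q ≠ 0 := by
  intro hpq
  rcases comp_eq_zero_iff.mp hpq with h | ⟨-, hC⟩
  · exact hp h
  · rw [hC, natDegree_C] at hq
    exact hq.false

theorem natDegree_eq_one_of_comp_eq_X_mul_comp {num den q : K[X]} (hden : den.comp q ≠ 0)
    (h : num.comp q = X * den.comp q) : q.natDegree = 1 := by
  have hdeg := congrArg natDegree h
  rw [natDegree_X_mul hden, natDegree_comp, natDegree_comp] at hdeg
  have hdvd : q.natDegree ∣ 1 :=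
    (Nat.dvd_add_right (dvd_mul_left _ _)).mp (hdeg ▸ dvd_mul_left _ _)
  exact Nat.dvd_one.mp hdvd

theorem comp_eq_X_mul_comp_of_eval_div_eq [Infinite K] {num den q : K[X]}
    (hden : den.comp q ≠ 0)
    (h : ∀ x : K, den.eval (q.eval x) ≠ 0 → num.eval (q.eval x) / den.eval (q.eval x) = x) :
    num.comp q = X * den.comp q := by
  apply eq_of_infinite_eval_eq
  refine (finite_setOfPred_isRoot hden).infinite_compl.mono fun x hroot => ?_
  have hx : den.eval (q.eval x) ≠ 0 := by simpa using hroot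
  simp only [Set.mem_ofPred_eq, eval_comp, eval_mul, eval_X]
  exact (div_eq_iff hx).mp (h x hx)

theorem not_exists_eval_div_eq_of_one_lt_natDegree [Infinite K] {q : K[X]}
    (hq : 1 < q.natDegree) :
    ¬ ∃ num den : K[X], den ≠ 0 ∧
      ∀ x : K, den.eval (q.eval x) ≠ 0 → num.eval (q.eval x) / den.eval (q.eval x) = x := by
  rintro ⟨num, den, hden, h⟩
  have hcomp : den.comp q ≠ 0 := comp_ne_zero_of_natDegree_pos hden (by omega)
  have hq_one := natDegree_eq_one_of_comp_eq_X_mul_comp hcomp (comp_eq_X_mul_comp_of_eval_div_eq hcomp h)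
  omega

end Polynomial

theorem cubic_injective_but_not_rationally_identifiable :
    Function.Injective (fun p : ℝ => p ^ 3 + p) ∧
    ¬ ∃ (num den : Polynomial ℝ), den ≠ 0 ∧
        ∀ p : ℝ, den.eval (p ^ 3 + p) ≠ 0 →
          num.eval (p ^ 3 + p) / den.eval (p ^ 3 + p) = p := by
  refine ⟨((Odd.strictMono_pow (by decide)).add strictMono_id).injective, ?_⟩
  have hdeg : (X ^ 3 + X : ℝ[X]).natDegree = 3 := by compute_degree!
  have key := not_exists_eval_div_eq_of_one_lt_natDegree (q := (X ^ 3 + X : ℝ[X])) (by omega)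
  simp only [eval_add, eval_pow, eval_X] at key
  exact key
end

section
/- Let ρ: ℝ≥0 × ℝ≥0 → ℝ be defined by ρ(p, t) = γ(p − t), where γ(s) = exp(1/s) for s < 0 and γ(s) = 0 for s ≥ 0. Then for any finite set of timepoints t₁ < ⋯ < t_N, there exist parameters p₁ ≠ p₂ such that ρ(p₁, tᵢ) = ρ(p₂, tᵢ) for all i, yet the functions t ↦ ρ(p₁, t) and t ↦ ρ(p₂, t) are not equal. -/
noncomputable def gammaBump (s : ℝ) : ℝ := if s < 0 then Real.exp (1 / s) else 0

noncomputable def rhoBump (p t : ℝ) : ℝ := gammaBump (p - t)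

theorem no_finite_timepoints_suffice (N : ℕ) (t : Fin N → ℝ)
    (ht_nonneg : ∀ i, 0 ≤ t i) (ht_mono : StrictMono t) :
    ∃ p₁ p₂ : ℝ, 0 < p₁ ∧ 0 < p₂ ∧ p₁ ≠ p₂ ∧
      (∀ i, rhoBump p₁ (t i) = rhoBump p₂ (t i)) ∧
      ¬ (∀ s : ℝ, 0 ≤ s → rhoBump p₁ s = rhoBump p₂ s) := by
  set M : ℝ := 1 + ∑ i, |t i| with hM
  have hMt : ∀ i, t i < M := by
    intro i
    have h1 : t i ≤ |t i| := le_abs_self _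
    have h2 : |t i| ≤ ∑ j, |t j| :=
      Finset.single_le_sum (f := fun j => |t j|) (fun j _ => abs_nonneg _) (Finset.mem_univ i)
    linarith
  have hMpos : 0 < M := by
    have : 0 ≤ ∑ i, |t i| := Finset.sum_nonneg fun i _ => abs_nonneg _
    linarith
  refine ⟨M + 1, M, by linarith, hMpos, by linarith, ?_, ?_⟩
  · intro i
    have h1 : ¬ (M + 1 - t i < 0) := by have := hMt i; linarith
    have h2 : ¬ (M - t i < 0) := by have := hMt i; linarith
    simp [rhoBump, gammaBump, h1, h2]
  · intro h
    have := h (M + 1/2) (by linarith)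
    have h1 : ¬ (M + 1 - (M + 1/2) < 0) := by linarith
    have h2 : M - (M + 1/2) < 0 := by linarith
    rw [rhoBump, rhoBump, gammaBump, gammaBump, if_neg h1, if_pos h2] at this
    exact (Real.exp_pos _).ne' this.symm
end

section
/- Let d: P × P → ℝ≥0 be a premetric on a metric space (P, d_P) such that d(p, p₀) = 0 if and only if φ(p) = φ(p₀) for a given map φ. Fix p₀ ∈ P. Then the equivalence class {p ∈ P : φ(p) = φ(p₀)} equals {p₀} if and only if for every δ > 0, the infimum of {d(p, p₀) : p ∈ P, d_P(p, p₀) = δ} is strictly positive. -/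
theorem multiscale_sloppiness_identifiability {P : Type*} [MetricSpace P] {Y : Type*}
    (φ : P → Y) (d : P → P → ℝ)
    (hd_nonneg : ∀ p q, 0 ≤ d p q)
    (hd_zero : ∀ p q, d p q = 0 ↔ φ p = φ q)
    (p₀ : P)
    (hattain : ∀ δ : ℝ, 0 < δ → ∃ p, dist p p₀ = δ ∧
      d p p₀ = sInf {x : ℝ | ∃ q, dist q p₀ = δ ∧ d q p₀ = x}) :
    ({p : P | φ p = φ p₀} = {p₀}) ↔
      ∀ δ : ℝ, 0 < δ → 0 < sInf {x : ℝ | ∃ q, dist q p₀ = δ ∧ d q p₀ = x} := by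
  constructor
  · intro hident δ hδ
    obtain ⟨p, hp, hinf⟩ := hattain δ hδ
    rw [← hinf]
    rcases lt_or_eq_of_le (hd_nonneg p p₀) with h | h
    · exact h
    · exfalso
      have hφ : φ p = φ p₀ := (hd_zero p p₀).mp h.symm
      have : p ∈ ({p₀} : Set P) := hident ▸ hφ
      rw [Set.mem_singleton_iff] at this
      subst this
      simp at hp
      linarith
  · intro hinf
    ext p
    simp only [Set.mem_setOf_eq, Set.mem_singleton_iff]
    constructor
    · intro hφ
      by_contra hne
      have hδ : 0 < dist p p₀ := dist_pos.mpr hne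
      have hd0 : d p p₀ = 0 := (hd_zero p p₀).mpr hφ
      have hmem : (0 : ℝ) ∈ {x : ℝ | ∃ q, dist q p₀ = dist p p₀ ∧ d q p₀ = x} :=
        ⟨p, rfl, hd0⟩
      have hbdd : BddBelow {x : ℝ | ∃ q, dist q p₀ = dist p p₀ ∧ d q p₀ = x} :=
        ⟨0, fun x ⟨q, _, hq⟩ => hq ▸ hd_nonneg q p₀⟩
      have := csInf_le hbdd hmem
      linarith [hinf (dist p p₀) hδ]
    · rintro rfl; rfl
end
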